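/- arXiv:2405.09970 — 2 statements merged into one kernel-verified Lean document; each statement's English description precedes it below -/
import Mathlib

section
/- The calculi GwIKt† and GwIKt‡ derive exactly the same sequents: for any sequent Γ ⇒ β, GwIKt† ⊢ Γ ⇒ β if and only if GwIKt‡ ⊢ Γ ⇒ β. -/
/-- Formulas of weak intuitionistic tense logic. -/
inductive Fml : Type
  | var : ℕ → Fml
  | top : Fml
  | bot : Fml
  | imp : Fml → Fml → Fml
  | and : Fml → Fml → Fml
  | or  : Fml → Fml → Fml
  | dia : Fml → Fml   -- ◇ (future diamond)
  | box : Fml → Fml   -- □ (future box)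
  | bdia : Fml → Fml  -- ◆ (past diamond)
  | bbox : Fml → Fml  -- ■ (past box)

/-- Atomic formulas: variables, ⊤, ⊥. -/
def Fml.Atomic : Fml → Prop
  | .var _ => True
  | .top => True
  | .bot => True
  | _ => False

/-- Formula structures: formulas closed under comma, ∘, •. -/
inductive FS : Type
  | fml : Fml → FS
  | comma : FS → FS → FS
  | circ : FS → FS    -- ∘, structural ◇
  | bullet : FS → FS  -- •, structural ◆

/-- Single-hole contexts. -/
inductive Ctx : Type
  | hole : Ctx
  | commaL : Ctx → FS → Ctx
  | commaR : FS → Ctx → Ctx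
  | circ : Ctx → Ctx
  | bullet : Ctx → Ctx

/-- Fill the hole of a context with a structure. -/
def Ctx.plug : Ctx → FS → FS
  | .hole, Δ => Δ
  | .commaL C Γ, Δ => .comma (C.plug Δ) Γ
  | .commaR Γ C, Δ => .comma Γ (C.plug Δ)
  | .circ C, Δ => .circ (C.plug Δ)
  | .bullet C, Δ => .bullet (C.plug Δ)

/-- Multi-hole contexts (for the mix rules Γ[·]ⁿ). -/
inductive MCtx : Type
  | hole : MCtx
  | fml : Fml → MCtx
  | comma : MCtx → MCtx → MCtx
  | circ : MCtx → MCtx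
  | bullet : MCtx → MCtx

/-- Fill all holes of a multi-context with the same structure. -/
def MCtx.plug : MCtx → FS → FS
  | .hole, Δ => Δ
  | .fml α, _ => .fml α
  | .comma C D, Δ => .comma (C.plug Δ) (D.plug Δ)
  | .circ C, Δ => .circ (C.plug Δ)
  | .bullet C, Δ => .bullet (C.plug Δ)

/-- Number n of designated occurrences in Γ[·]ⁿ. -/
def MCtx.holes : MCtx → ℕ
  | .hole => 1
  | .fml _ => 0
  | .comma C D => C.holes + D.holes
  | .circ C => C.holes
  | .bullet C => C.holes

/-- Cut formulas allowed in (Cut_*): not atomic, not □- or ■-formulas, not implications. -/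
def Fml.Starish (α : Fml) : Prop :=
  ¬ α.Atomic ∧ (∀ a, α ≠ .box a) ∧ (∀ a, α ≠ .bbox a) ∧ (∀ a b, α ≠ .imp a b)

/-- Flags selecting the variant of the calculus:
`idFull`: unrestricted identity axiom (Id) vs atomic (Id_A);
`conF`: full formula contraction (Con_F) vs the restricted contractions
(Con_A), (Con_□), (Con_■), (Con_→);
`cut`: the single cut rule (Cut);
`mix`: the four cut-like rules (Mix_A), (Mix_□), (Mix_■), (Mix_→), (Cut_*). -/
structure Rules where
  idFull : Bool
  conF : Bool
  cut : Bool
  mix : Bool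

/-- `DerH R n Γ β`: the sequent Γ ⇒ β has a derivation of height at most `n`
in the calculus determined by `R`. -/
inductive DerH (R : Rules) : ℕ → FS → Fml → Prop
  -- (Id_A)
  | idA (n : ℕ) (α : Fml) : 1 ≤ n → α.Atomic → DerH R n (.fml α) α
  -- (Id), only in calculi with unrestricted identity
  | idF (n : ℕ) (α : Fml) : R.idFull = true → 1 ≤ n → DerH R n (.fml α) α
  -- (⊤)
  | topL (n : ℕ) (Γ : Ctx) (Δ : FS) (β : Fml) :
      DerH R n (Γ.plug (.fml .top)) β → DerH R (n + 1) (Γ.plug Δ) β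
  -- (⊥)
  | botL (n : ℕ) (Γ : Ctx) (Δ : FS) (β : Fml) :
      DerH R n Δ .bot → DerH R (n + 1) (Γ.plug Δ) β
  -- (∧L)
  | andL (n : ℕ) (Γ : Ctx) (α₁ α₂ β : Fml) :
      DerH R n (Γ.plug (.comma (.fml α₁) (.fml α₂))) β →
      DerH R (n + 1) (Γ.plug (.fml (α₁.and α₂))) β
  -- (∧R)
  | andR (n : ℕ) (Γ : FS) (β₁ β₂ : Fml) :
      DerH R n Γ β₁ → DerH R n Γ β₂ → DerH R (n + 1) Γ (β₁.and β₂)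
  -- (∨L)
  | orL (n : ℕ) (Γ : Ctx) (α₁ α₂ β : Fml) :
      DerH R n (Γ.plug (.fml α₁)) β → DerH R n (Γ.plug (.fml α₂)) β →
      DerH R (n + 1) (Γ.plug (.fml (α₁.or α₂))) β
  -- (∨R), i = 1
  | orR₁ (n : ℕ) (Γ : FS) (β₁ β₂ : Fml) :
      DerH R n Γ β₁ → DerH R (n + 1) Γ (β₁.or β₂)
  -- (∨R), i = 2
  | orR₂ (n : ℕ) (Γ : FS) (β₁ β₂ : Fml) :
      DerH R n Γ β₂ → DerH R (n + 1) Γ (β₁.or β₂)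
  -- (→L)
  | impL (n : ℕ) (Γ : Ctx) (Δ : FS) (α₁ α₂ β : Fml) :
      DerH R n Δ α₁ → DerH R n (Γ.plug (.fml α₂)) β →
      DerH R (n + 1) (Γ.plug (.comma Δ (.fml (α₁.imp α₂)))) β
  -- (→R)
  | impR (n : ℕ) (Γ : FS) (β₁ β₂ : Fml) :
      DerH R n (.comma (.fml β₁) Γ) β₂ → DerH R (n + 1) Γ (β₁.imp β₂)
  -- (◇L)
  | diaL (n : ℕ) (Γ : Ctx) (α β : Fml) :
      DerH R n (Γ.plug (.circ (.fml α))) β → DerH R (n + 1) (Γ.plug (.fml (α.dia))) β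
  -- (◇R)
  | diaR (n : ℕ) (Γ : FS) (β : Fml) :
      DerH R n Γ β → DerH R (n + 1) (.circ Γ) (β.dia)
  -- (◆L)
  | bdiaL (n : ℕ) (Γ : Ctx) (α β : Fml) :
      DerH R n (Γ.plug (.bullet (.fml α))) β → DerH R (n + 1) (Γ.plug (.fml (α.bdia))) β
  -- (◆R)
  | bdiaR (n : ℕ) (Γ : FS) (β : Fml) :
      DerH R n Γ β → DerH R (n + 1) (.bullet Γ) (β.bdia)
  -- (■L)
  | bboxL (n : ℕ) (Γ : Ctx) (α β : Fml) :
      DerH R n (Γ.plug (.fml α)) β → DerH R (n + 1) (Γ.plug (.circ (.fml (α.bbox)))) β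
  -- (■R)
  | bboxR (n : ℕ) (Γ : FS) (β : Fml) :
      DerH R n (.circ Γ) β → DerH R (n + 1) Γ (β.bbox)
  -- (□L)
  | boxL (n : ℕ) (Γ : Ctx) (α β : Fml) :
      DerH R n (Γ.plug (.fml α)) β → DerH R (n + 1) (Γ.plug (.bullet (.fml (α.box)))) β
  -- (□R)
  | boxR (n : ℕ) (Γ : FS) (β : Fml) :
      DerH R n (.bullet Γ) β → DerH R (n + 1) Γ (β.box)
  -- (Con∘)
  | conCirc (n : ℕ) (Γ : Ctx) (Δ₁ Δ₂ : FS) (β : Fml) :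
      DerH R n (Γ.plug (.comma (.circ Δ₁) (.circ Δ₂))) β →
      DerH R (n + 1) (Γ.plug (.circ (.comma Δ₁ Δ₂))) β
  -- (Con•)
  | conBullet (n : ℕ) (Γ : Ctx) (Δ₁ Δ₂ : FS) (β : Fml) :
      DerH R n (Γ.plug (.comma (.bullet Δ₁) (.bullet Δ₂))) β →
      DerH R (n + 1) (Γ.plug (.bullet (.comma Δ₁ Δ₂))) β
  -- (Con_F), only with full contraction
  | conF (n : ℕ) (Γ : Ctx) (α β : Fml) : R.conF = true →
      DerH R n (Γ.plug (.comma (.fml α) (.fml α))) β →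
      DerH R (n + 1) (Γ.plug (.fml α)) β
  -- (Con_A), only in the restricted calculi
  | conA (n : ℕ) (Γ : Ctx) (α β : Fml) : R.conF = false → α.Atomic →
      DerH R n (Γ.plug (.comma (.fml α) (.fml α))) β →
      DerH R (n + 1) (Γ.plug (.fml α)) β
  -- (Con_□)
  | conBox (n : ℕ) (Γ : Ctx) (α β : Fml) : R.conF = false →
      DerH R n (Γ.plug (.comma (.fml α.box) (.fml α.box))) β →
      DerH R (n + 1) (Γ.plug (.fml α.box)) β
  -- (Con_■)
  | conBBox (n : ℕ) (Γ : Ctx) (α β : Fml) : R.conF = false →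
      DerH R n (Γ.plug (.comma (.fml α.bbox) (.fml α.bbox))) β →
      DerH R (n + 1) (Γ.plug (.fml α.bbox)) β
  -- (Con_→)
  | conImp (n : ℕ) (Γ : Ctx) (α₁ α₂ β : Fml) : R.conF = false →
      DerH R n (Γ.plug (.comma (.fml (α₁.imp α₂)) (.fml (α₁.imp α₂)))) β →
      DerH R (n + 1) (Γ.plug (.fml (α₁.imp α₂))) β
  -- (Wk), i = 1
  | wk₁ (n : ℕ) (Γ : Ctx) (Δ₁ Δ₂ : FS) (β : Fml) :
      DerH R n (Γ.plug Δ₁) β → DerH R (n + 1) (Γ.plug (.comma Δ₁ Δ₂)) β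
  -- (Wk), i = 2
  | wk₂ (n : ℕ) (Γ : Ctx) (Δ₁ Δ₂ : FS) (β : Fml) :
      DerH R n (Γ.plug Δ₂) β → DerH R (n + 1) (Γ.plug (.comma Δ₁ Δ₂)) β
  -- (Ex)
  | ex (n : ℕ) (Γ : Ctx) (Δ₁ Δ₂ : FS) (β : Fml) :
      DerH R n (Γ.plug (.comma Δ₁ Δ₂)) β → DerH R (n + 1) (Γ.plug (.comma Δ₂ Δ₁)) β
  -- (Dual∘•)
  | dualCB (n : ℕ) (Γ : Ctx) (Δ₁ Δ₂ : FS) (β : Fml) :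
      DerH R n (.comma (.circ Δ₁) Δ₂) .bot →
      DerH R (n + 1) (Γ.plug (.comma Δ₁ (.bullet Δ₂))) β
  -- (Dual•∘)
  | dualBC (n : ℕ) (Γ : Ctx) (Δ₁ Δ₂ : FS) (β : Fml) :
      DerH R n (.comma (.bullet Δ₁) Δ₂) .bot →
      DerH R (n + 1) (Γ.plug (.comma Δ₁ (.circ Δ₂))) β
  -- (Cut)
  | cut (n : ℕ) (Γ : Ctx) (Δ : FS) (α β : Fml) : R.cut = true →
      DerH R n Δ α → DerH R n (Γ.plug (.fml α)) β → DerH R (n + 1) (Γ.plug Δ) β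
  -- (Mix_A)
  | mixA (n : ℕ) (Γ : MCtx) (Δ : FS) (α β : Fml) : R.mix = true →
      α.Atomic → 1 ≤ Γ.holes →
      DerH R n Δ α → DerH R n (Γ.plug (.fml α)) β → DerH R (n + 1) (Γ.plug Δ) β
  -- (Mix_□)
  | mixBox (n : ℕ) (Γ : MCtx) (Δ : FS) (α β : Fml) : R.mix = true →
      1 ≤ Γ.holes →
      DerH R n Δ α.box → DerH R n (Γ.plug (.fml α.box)) β → DerH R (n + 1) (Γ.plug Δ) β
  -- (Mix_■)
  | mixBBox (n : ℕ) (Γ : MCtx) (Δ : FS) (α β : Fml) : R.mix = true →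
      1 ≤ Γ.holes →
      DerH R n Δ α.bbox → DerH R n (Γ.plug (.fml α.bbox)) β → DerH R (n + 1) (Γ.plug Δ) β
  -- (Mix_→)
  | mixImp (n : ℕ) (Γ : MCtx) (Δ : FS) (α₁ α₂ β : Fml) : R.mix = true →
      1 ≤ Γ.holes →
      DerH R n Δ (α₁.imp α₂) → DerH R n (Γ.plug (.fml (α₁.imp α₂))) β →
      DerH R (n + 1) (Γ.plug Δ) β
  -- (Cut_*)
  | cutStar (n : ℕ) (Γ : Ctx) (Δ : FS) (α β : Fml) : R.mix = true →
      α.Starish →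
      DerH R n Δ α → DerH R n (Γ.plug (.fml α)) β → DerH R (n + 1) (Γ.plug Δ) β

/-- Derivability (some height). -/
def Der (R : Rules) (Γ : FS) (β : Fml) : Prop := ∃ n, DerH R n Γ β

/-- GwIKt: full identity, full contraction, with cut. -/
def GwIKt : Rules := ⟨true, true, true, false⟩
/-- GwIKt without the cut rule. -/
def GwIKtCF : Rules := ⟨true, true, false, false⟩
/-- GwIKt† : atomic identity, restricted contractions, with cut. -/
def GwIKtD : Rules := ⟨false, false, true, false⟩
/-- cut-free GwIKt†. -/
def GwIKtDCF : Rules := ⟨false, false, false, false⟩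
/-- GwIKt‡ : cut replaced by the four cut-like rules. -/
def GwIKtDD : Rules := ⟨false, false, false, true⟩

section Aux

theorem DerH.succ {R : Rules} {n : ℕ} {Γ : FS} {β : Fml} (h : DerH R n Γ β) :
    DerH R (n + 1) Γ β := by
  induction h <;>
    first
      | exact .idA _ _ (by omega) ‹_›
      | exact .idF _ _ ‹_› (by omega)
      | solve_by_elim (maxDepth := 16) [DerH.topL, DerH.botL, DerH.andL, DerH.andR, DerH.orL, DerH.orR₁,
          DerH.orR₂, DerH.impL, DerH.impR, DerH.diaL, DerH.diaR, DerH.bdiaL, DerH.bdiaR,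
          DerH.bboxL, DerH.bboxR, DerH.boxL, DerH.boxR, DerH.conCirc, DerH.conBullet,
          DerH.conF, DerH.conA, DerH.conBox, DerH.conBBox, DerH.conImp, DerH.wk₁, DerH.wk₂,
          DerH.ex, DerH.dualCB, DerH.dualBC, DerH.cut, DerH.mixA, DerH.mixBox, DerH.mixBBox,
          DerH.mixImp, DerH.cutStar]

theorem DerH.mono {R : Rules} {n m : ℕ} {Γ : FS} {β : Fml} (h : DerH R n Γ β)
    (hm : n ≤ m) : DerH R m Γ β := by
  induction m, hm using Nat.le_induction with
  | base => exact h
  | succ m _ ih => exact ih.succ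

def Ctx.comp : Ctx → Ctx → Ctx
  | .hole, D => D
  | .commaL C Γ, D => .commaL (C.comp D) Γ
  | .commaR Γ C, D => .commaR Γ (C.comp D)
  | .circ C, D => .circ (C.comp D)
  | .bullet C, D => .bullet (C.comp D)

theorem Ctx.comp_plug (C D : Ctx) (Δ : FS) :
    (C.comp D).plug Δ = C.plug (D.plug Δ) := by
  induction C <;> simp [Ctx.comp, Ctx.plug, *]

def FS.toM : FS → MCtx
  | .fml a => .fml a
  | .comma a b => .comma a.toM b.toM
  | .circ a => .circ a.toM
  | .bullet a => .bullet a.toM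

theorem FS.toM_plug (Γ Δ : FS) : Γ.toM.plug Δ = Γ := by
  induction Γ <;> simp [FS.toM, MCtx.plug, *]

theorem FS.toM_holes (Γ : FS) : Γ.toM.holes = 0 := by
  induction Γ <;> simp [FS.toM, MCtx.holes, *]

def Ctx.toM : Ctx → MCtx
  | .hole => .hole
  | .commaL C Γ => .comma C.toM Γ.toM
  | .commaR Γ C => .comma Γ.toM C.toM
  | .circ C => .circ C.toM
  | .bullet C => .bullet C.toM

theorem Ctx.toM_plug (C : Ctx) (Δ : FS) : C.toM.plug Δ = C.plug Δ := by
  induction C <;> simp [Ctx.toM, MCtx.plug, Ctx.plug, FS.toM_plug, *]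

theorem Ctx.toM_holes (C : Ctx) : C.toM.holes = 1 := by
  induction C <;> simp [Ctx.toM, MCtx.holes, FS.toM_holes, *]

end Aux
section Aux2

theorem cut_multi {R : Rules} (hc : R.cut = true) {Δ : FS} {α β : Fml}
    (hΔ : Der R Δ α) :
    ∀ (G : MCtx) (E : Ctx),
      Der R (E.plug (G.plug (.fml α))) β → Der R (E.plug (G.plug Δ)) β := by
  intro G
  induction G with
  | hole =>
      intro E h
      obtain ⟨n1, h1⟩ := hΔ
      obtain ⟨n2, h2⟩ := h
      exact ⟨max n1 n2 + 1,
        .cut _ E Δ α β hc (h1.mono (le_max_left _ _)) (h2.mono (le_max_right _ _))⟩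
  | fml a => intro E h; exact h
  | comma C D ihC ihD =>
      intro E h
      have h1 := ihC (E.comp (.commaL .hole (D.plug (.fml α))))
        (by simpa [Ctx.comp_plug, Ctx.plug, MCtx.plug] using h)
      have h2 := ihD (E.comp (.commaR (C.plug Δ) .hole))
        (by simpa [Ctx.comp_plug, Ctx.plug, MCtx.plug] using h1)
      simpa [Ctx.comp_plug, Ctx.plug, MCtx.plug] using h2
  | circ C ih =>
      intro E h
      have h1 := ih (E.comp (.circ .hole)) (by simpa [Ctx.comp_plug, Ctx.plug, MCtx.plug] using h)
      simpa [Ctx.comp_plug, Ctx.plug, MCtx.plug] using h1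
  | bullet C ih =>
      intro E h
      have h1 := ih (E.comp (.bullet .hole)) (by simpa [Ctx.comp_plug, Ctx.plug, MCtx.plug] using h)
      simpa [Ctx.comp_plug, Ctx.plug, MCtx.plug] using h1

theorem dd_cut (Γ : Ctx) (Δ : FS) (α β : Fml)
    (h1 : Der GwIKtDD Δ α) (h2 : Der GwIKtDD (Γ.plug (.fml α)) β) :
    Der GwIKtDD (Γ.plug Δ) β := by
  obtain ⟨n1, h1⟩ := h1
  obtain ⟨n2, h2⟩ := h2
  have h1 := h1.mono (le_max_left n1 n2)
  have h2 := h2.mono (le_max_right n1 n2)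
  rw [← Ctx.toM_plug] at h2 ⊢
  have hh : 1 ≤ Γ.toM.holes := by rw [Ctx.toM_holes]
  match α with
  | .var p => exact ⟨_, .mixA _ Γ.toM Δ (.var p) β rfl trivial hh h1 h2⟩
  | .top => exact ⟨_, .mixA _ Γ.toM Δ .top β rfl trivial hh h1 h2⟩
  | .bot => exact ⟨_, .mixA _ Γ.toM Δ .bot β rfl trivial hh h1 h2⟩
  | .box a => exact ⟨_, .mixBox _ Γ.toM Δ a β rfl hh h1 h2⟩
  | .bbox a => exact ⟨_, .mixBBox _ Γ.toM Δ a β rfl hh h1 h2⟩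
  | .imp a b => exact ⟨_, .mixImp _ Γ.toM Δ a b β rfl hh h1 h2⟩
  | .and a b =>
      rw [Ctx.toM_plug] at h2 ⊢
      exact ⟨_, .cutStar _ Γ Δ (.and a b) β rfl
        ⟨by simp [Fml.Atomic], by simp, by simp, by simp⟩ h1 h2⟩
  | .or a b =>
      rw [Ctx.toM_plug] at h2 ⊢
      exact ⟨_, .cutStar _ Γ Δ (.or a b) β rfl
        ⟨by simp [Fml.Atomic], by simp, by simp, by simp⟩ h1 h2⟩
  | .dia a =>
      rw [Ctx.toM_plug] at h2 ⊢
      exact ⟨_, .cutStar _ Γ Δ (.dia a) β rfl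
        ⟨by simp [Fml.Atomic], by simp, by simp, by simp⟩ h1 h2⟩
  | .bdia a =>
      rw [Ctx.toM_plug] at h2 ⊢
      exact ⟨_, .cutStar _ Γ Δ (.bdia a) β rfl
        ⟨by simp [Fml.Atomic], by simp, by simp, by simp⟩ h1 h2⟩

end Aux2
section Main

theorem trans_der {R R' : Rules}
    (hid : R.idFull = true → R'.idFull = true)
    (hcf : R.conF = true → R'.conF = true)
    (hcr : R.conF = false → R'.conF = false)
    (hcut : R.cut = true → ∀ (Γ : Ctx) (Δ : FS) (α β : Fml),
      Der R' Δ α → Der R' (Γ.plug (.fml α)) β → Der R' (Γ.plug Δ) β)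
    (hmixA : R.mix = true → ∀ (Γ : MCtx) (Δ : FS) (α β : Fml), α.Atomic → 1 ≤ Γ.holes →
      Der R' Δ α → Der R' (Γ.plug (.fml α)) β → Der R' (Γ.plug Δ) β)
    (hmixBox : R.mix = true → ∀ (Γ : MCtx) (Δ : FS) (α β : Fml), 1 ≤ Γ.holes →
      Der R' Δ α.box → Der R' (Γ.plug (.fml α.box)) β → Der R' (Γ.plug Δ) β)
    (hmixBBox : R.mix = true → ∀ (Γ : MCtx) (Δ : FS) (α β : Fml), 1 ≤ Γ.holes →
      Der R' Δ α.bbox → Der R' (Γ.plug (.fml α.bbox)) β → Der R' (Γ.plug Δ) β)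
    (hmixImp : R.mix = true → ∀ (Γ : MCtx) (Δ : FS) (α₁ α₂ β : Fml), 1 ≤ Γ.holes →
      Der R' Δ (α₁.imp α₂) → Der R' (Γ.plug (.fml (α₁.imp α₂))) β → Der R' (Γ.plug Δ) β)
    (hstar : R.mix = true → ∀ (Γ : Ctx) (Δ : FS) (α β : Fml), α.Starish →
      Der R' Δ α → Der R' (Γ.plug (.fml α)) β → Der R' (Γ.plug Δ) β)
    {n : ℕ} {Γ : FS} {β : Fml} (h : DerH R n Γ β) : Der R' Γ β := by
  induction h
  case idA n α h1 h2 => exact ⟨1, .idA 1 α le_rfl h2⟩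
  case idF n α hr h1 => exact ⟨1, .idF 1 α (hid hr) le_rfl⟩
  case cut n Γ Δ α β hr d1 d2 ih1 ih2 => exact hcut hr Γ Δ α β ih1 ih2
  case mixA n Γ Δ α β hr ha hh d1 d2 ih1 ih2 => exact hmixA hr Γ Δ α β ha hh ih1 ih2
  case mixBox n Γ Δ α β hr hh d1 d2 ih1 ih2 => exact hmixBox hr Γ Δ α β hh ih1 ih2
  case mixBBox n Γ Δ α β hr hh d1 d2 ih1 ih2 => exact hmixBBox hr Γ Δ α β hh ih1 ih2
  case mixImp n Γ Δ α₁ α₂ β hr hh d1 d2 ih1 ih2 => exact hmixImp hr Γ Δ α₁ α₂ β hh ih1 ih2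
  case cutStar n Γ Δ α β hr hs d1 d2 ih1 ih2 => exact hstar hr Γ Δ α β hs ih1 ih2
  case andR n Γ β₁ β₂ d1 d2 ih1 ih2 =>
      obtain ⟨m1, h1⟩ := ih1; obtain ⟨m2, h2⟩ := ih2
      exact ⟨_, .andR (max m1 m2) Γ β₁ β₂ (h1.mono (le_max_left _ _))
        (h2.mono (le_max_right _ _))⟩
  case orL n Γ α₁ α₂ β d1 d2 ih1 ih2 =>
      obtain ⟨m1, h1⟩ := ih1; obtain ⟨m2, h2⟩ := ih2
      exact ⟨_, .orL (max m1 m2) Γ α₁ α₂ β (h1.mono (le_max_left _ _))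
        (h2.mono (le_max_right _ _))⟩
  case impL n Γ Δ α₁ α₂ β d1 d2 ih1 ih2 =>
      obtain ⟨m1, h1⟩ := ih1; obtain ⟨m2, h2⟩ := ih2
      exact ⟨_, .impL (max m1 m2) Γ Δ α₁ α₂ β (h1.mono (le_max_left _ _))
        (h2.mono (le_max_right _ _))⟩
  all_goals
    obtain ⟨m, h⟩ := ‹Der R' _ _›
    exact ⟨m + 1, by
      solve_by_elim (maxDepth := 16) [DerH.topL, DerH.botL, DerH.andL, DerH.orR₁,
        DerH.orR₂, DerH.impR, DerH.diaL, DerH.diaR, DerH.bdiaL, DerH.bdiaR,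
        DerH.bboxL, DerH.bboxR, DerH.boxL, DerH.boxR, DerH.conCirc, DerH.conBullet,
        DerH.conF, DerH.conA, DerH.conBox, DerH.conBBox, DerH.conImp, DerH.wk₁, DerH.wk₂,
        DerH.ex, DerH.dualCB, DerH.dualBC, hcf, hcr]⟩

end Main
/-- GwIKt† and GwIKt‡ derive exactly the same sequents. -/
theorem stmt11_dagger_iff_ddagger (Γ : FS) (β : Fml) :
    Der GwIKtD Γ β ↔ Der GwIKtDD Γ β := by
  constructor
  · rintro ⟨n, h⟩
    exact trans_der (fun h => absurd h (by decide)) (fun h => absurd h (by decide)) (fun _ => rfl)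
      (fun _ => dd_cut) (fun h => absurd h (by decide)) (fun h => absurd h (by decide)) (fun h => absurd h (by decide))
      (fun h => absurd h (by decide)) (fun h => absurd h (by decide)) h
  · rintro ⟨n, h⟩
    refine trans_der (fun h => absurd h (by decide)) (fun h => absurd h (by decide)) (fun _ => rfl)
      (fun h => absurd h (by decide))
      (fun _ G Δ α β' _ _ d1 d2 => cut_multi rfl d1 G .hole d2)
      (fun _ G Δ α β' _ d1 d2 => cut_multi rfl d1 G .hole d2)
      (fun _ G Δ α β' _ d1 d2 => cut_multi rfl d1 G .hole d2)
      (fun _ G Δ α₁ α₂ β' _ d1 d2 => cut_multi rfl d1 G .hole d2)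
      (fun _ G Δ α β' _ d1 d2 => ?_) h
    obtain ⟨n1, h1⟩ := d1
    obtain ⟨n2, h2⟩ := d2
    exact ⟨_, .cut (max n1 n2) G Δ α β' rfl (h1.mono (le_max_left _ _))
      (h2.mono (le_max_right _ _))⟩
end

section
/- The monotonicity rules for all four tense operators are admissible in GwIKt: for each ♭ ∈ {◇, □, ◆, ■}, if α ⇒ β is derivable in GwIKt then ♭α ⇒ ♭β is derivable in GwIKt. -/
namespace Der

variable {R : Rules} {α β : Fml}

theorem dia_mono (h : Der R (.fml α) β) : Der R (.fml α.dia) β.dia :=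
  let ⟨n, h⟩ := h
  ⟨n + 2, .diaL (n + 1) .hole α β.dia (.diaR n _ β h)⟩

theorem box_mono (h : Der R (.fml α) β) : Der R (.fml α.box) β.box :=
  let ⟨n, h⟩ := h
  ⟨n + 2, .boxR (n + 1) _ β (.boxL n .hole α β h)⟩

theorem bdia_mono (h : Der R (.fml α) β) : Der R (.fml α.bdia) β.bdia :=
  let ⟨n, h⟩ := h
  ⟨n + 2, .bdiaL (n + 1) .hole α β.bdia (.bdiaR n _ β h)⟩

theorem bbox_mono (h : Der R (.fml α) β) : Der R (.fml α.bbox) β.bbox :=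
  let ⟨n, h⟩ := h
  ⟨n + 2, .bboxR (n + 1) _ β (.bboxL n .hole α β h)⟩

end Der

/-- monotonicity rules for ◇, □, ◆, ■ are admissible in GwIKt. -/
theorem stmt15_monotonicity (α β : Fml) (h : Der GwIKt (.fml α) β) :
    Der GwIKt (.fml α.dia) β.dia ∧ Der GwIKt (.fml α.box) β.box ∧
    Der GwIKt (.fml α.bdia) β.bdia ∧ Der GwIKt (.fml α.bbox) β.bbox :=
  ⟨h.dia_mono, h.box_mono, h.bdia_mono, h.bbox_mono⟩
end
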